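/- Let G be an abelian group that is p-torsion (every element is killed by a power of p), and suppose the subgroups G[p^i] = {g ∈ G : p^i g = 0} are finite for all i while G itself is infinite. Then there exists an injective group homomorphism from the Prüfer group ℚ_p/ℤ_p into G. -/

import Mathlib

/-!
Choose points `P n ∈ G` of exact order `pⁿ` with `p • P (n + 1) = P n`: the sets of elements of
order `pⁿ` are finite, nonempty because `G` is infinite, and linked by multiplication by `p`, so
Kőnig's lemma gives a compatible sequence. Then `z / pⁿ ↦ (z mod pⁿ) • P n` is a well-defined
homomorphism `ℚ_p → G`; as `P n` has exact order `pⁿ`, its kernel is exactly `ℤ_p`.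
-/

/-- The copy of `ℤ_p` inside `ℚ_p`, as an additive subgroup. -/
noncomputable def padicIntSubgroup (p : ℕ) [Fact p.Prime] : AddSubgroup ℚ_[p] :=
  AddMonoidHom.range ((PadicInt.Coe.ringHom : ℤ_[p] →+* ℚ_[p]).toAddMonoidHom)

/-- The Prüfer `p`-group `ℚ_p/ℤ_p`. -/
noncomputable abbrev PruferGroup (p : ℕ) [Fact p.Prime] :=
  ℚ_[p] ⧸ padicIntSubgroup p

open PadicInt

variable {G : Type*} [AddCommGroup G] {p : ℕ}

theorem addOrderOf_pow_sub_smul [NeZero p] {g : G} {i j : ℕ} (hg : addOrderOf g = p ^ j)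
    (hij : i ≤ j) : addOrderOf (p ^ (j - i) • g) = p ^ i := by
  rw [addOrderOf_nsmul_of_dvd (pow_ne_zero _ (NeZero.ne p)) (hg ▸ pow_dvd_pow p (j.sub_le i)),
    hg, Nat.pow_div (j.sub_le i) (Nat.pos_of_neZero p), Nat.sub_sub_self hij]

section

variable [hp : Fact p.Prime]

theorem exists_addOrderOf_eq_pow [Infinite G] (htor : ∀ g : G, ∃ i : ℕ, p ^ i • g = 0)
    (hfin : ∀ i : ℕ, {g : G | p ^ i • g = 0}.Finite) (n : ℕ) :
    ∃ g : G, addOrderOf g = p ^ n := by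
  obtain ⟨g, hg : ¬p ^ n • g = 0⟩ := (hfin n).infinite_compl.nonempty
  obtain ⟨k, hk⟩ := exists_addOrderOf_eq_prime_pow_iff.mpr (htor g)
  have hnk : n ≤ k := by
    by_contra! hkn
    exact hg (addOrderOf_dvd_iff_nsmul_eq_zero.mp (hk ▸ pow_dvd_pow p hkn.le))
  exact ⟨_, addOrderOf_pow_sub_smul hk hnk⟩

theorem exists_compatible_seq_addOrderOf_eq_pow [Infinite G]
    (htor : ∀ g : G, ∃ i : ℕ, p ^ i • g = 0) (hfin : ∀ i : ℕ, {g : G | p ^ i • g = 0}.Finite) :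
    ∃ P : ℕ → G, (∀ n, addOrderOf (P n) = p ^ n) ∧ ∀ n, p • P (n + 1) = P n := by
  let α (n : ℕ) := {g : G // addOrderOf g = p ^ n}
  have (n : ℕ) : Finite (α n) :=
    Set.Finite.to_subtype <| (hfin n).subset fun g (hg : addOrderOf g = p ^ n) ↦
      hg ▸ addOrderOf_nsmul_eq_zero g
  have (n : ℕ) : Nonempty (α n) :=
    let ⟨g, hg⟩ := exists_addOrderOf_eq_pow htor hfin n; ⟨⟨g, hg⟩⟩
  obtain ⟨f, hf⟩ := exists_seq_forall_proj_of_forall_finite (α := α)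
    (fun {i j} hij g ↦ ⟨p ^ (j - i) • g.1, addOrderOf_pow_sub_smul g.2 hij⟩)
    (fun _ _ ↦ by simp)
    (fun i j k hij hjk _ ↦ Subtype.ext <| by
      simp only [smul_smul, ← pow_add, Nat.add_comm (j - i), Nat.sub_add_sub_cancel hjk hij])
    (fun _ _ ↦ Set.toFinite _)
  exact ⟨fun n ↦ (f n).1, fun n ↦ (f n).2,
    fun n ↦ by simpa using congrArg Subtype.val (hf n.le_succ)⟩

theorem exists_coe_eq_pow_mul (x : ℚ_[p]) : ∃ (n : ℕ) (z : ℤ_[p]), (z : ℚ_[p]) = p ^ n * x := by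
  obtain ⟨n, hn⟩ := pow_unbounded_of_one_lt ‖x‖ (Nat.one_lt_cast.mpr hp.out.one_lt)
  refine ⟨n, ⟨p ^ n * x, ?_⟩, rfl⟩
  rw [norm_mul, norm_pow, Padic.norm_p, inv_pow,
    inv_mul_le_iff₀ (pow_pos (Nat.cast_pos.mpr hp.out.pos) n), mul_one]
  exact hn.le

end

namespace PruferGroup

variable (P : ℕ → G) (hP : ∀ n, p ^ n • P n = 0)

noncomputable def zmodPowHom (n : ℕ) : ZMod (p ^ n) →+ G :=
  ZMod.lift (p ^ n) ⟨zmultiplesHom G (P n), by rw [zmultiplesHom_apply, natCast_zsmul, hP]⟩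

theorem zmodPowHom_natCast (n m : ℕ) : zmodPowHom P hP n m = m • P n := by
  rw [← Int.cast_natCast, zmodPowHom, ZMod.lift_coe, zmultiplesHom_apply, natCast_zsmul]

theorem zmodPowHom_injective [NeZero p] {n : ℕ} (hord : addOrderOf (P n) = p ^ n) :
    Function.Injective (zmodPowHom P hP n) := by
  refine (injective_iff_map_eq_zero _).mpr fun a ha ↦ ?_
  rw [← ZMod.natCast_zmod_val a, zmodPowHom_natCast, ← addOrderOf_dvd_iff_nsmul_eq_zero,
    hord] at ha
  rw [← ZMod.natCast_zmod_val a, ZMod.natCast_eq_zero_iff]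
  exact ha

theorem zmodPowHom_succ_p_mul [NeZero p] (hcomp : ∀ n, p • P (n + 1) = P n) (n : ℕ)
    (a : ZMod (p ^ (n + 1))) :
    zmodPowHom P hP (n + 1) (p * a) =
      zmodPowHom P hP n (ZMod.castHom (pow_dvd_pow p n.le_succ) _ a) := by
  rw [← ZMod.natCast_zmod_val a, map_natCast, ← Nat.cast_mul, zmodPowHom_natCast,
    zmodPowHom_natCast, mul_nsmul, hcomp]

variable [hp : Fact p.Prime]

noncomputable def padicIntHom (n : ℕ) : ℤ_[p] →+ G :=
  (zmodPowHom P hP n).comp (toZModPow n).toAddMonoidHom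

theorem padicIntHom_apply (n : ℕ) (z : ℤ_[p]) :
    padicIntHom P hP n z = zmodPowHom P hP n (toZModPow n z) := rfl

theorem padicIntHom_eq_zero_iff {n : ℕ} (hord : addOrderOf (P n) = p ^ n) {z : ℤ_[p]} :
    padicIntHom P hP n z = 0 ↔ (p : ℤ_[p]) ^ n ∣ z := by
  rw [padicIntHom_apply, map_eq_zero_iff _ (zmodPowHom_injective P hP hord), ← RingHom.mem_ker,
    ker_toZModPow, Ideal.mem_span_singleton]

theorem padicIntHom_pow_mul (n : ℕ) (z : ℤ_[p]) : padicIntHom P hP n (p ^ n * z) = 0 := by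
  rw [padicIntHom_apply, map_mul, map_pow, map_natCast, ← Nat.cast_pow, ZMod.natCast_self,
    zero_mul, map_zero]

theorem padicIntHom_succ_p_mul (hcomp : ∀ n, p • P (n + 1) = P n) (n : ℕ) (z : ℤ_[p]) :
    padicIntHom P hP (n + 1) (p * z) = padicIntHom P hP n z := by
  rw [padicIntHom_apply, padicIntHom_apply, map_mul, map_natCast,
    zmodPowHom_succ_p_mul P hP hcomp, ← RingHom.comp_apply,
    zmod_cast_comp_toZModPow n (n + 1) n.le_succ]

theorem padicIntHom_add_pow_mul (hcomp : ∀ n, p • P (n + 1) = P n) (n k : ℕ) (z : ℤ_[p]) :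
    padicIntHom P hP (n + k) (p ^ k * z) = padicIntHom P hP n z := by
  induction k with
  | zero => simp
  | succ k ih => rw [← add_assoc, pow_succ', mul_assoc, padicIntHom_succ_p_mul P hP hcomp, ih]

theorem padicIntHom_eq_of_coe_eq (hcomp : ∀ n, p • P (n + 1) = P n) {x : ℚ_[p]} {m n : ℕ}
    {z w : ℤ_[p]} (hz : (z : ℚ_[p]) = p ^ n * x) (hw : (w : ℚ_[p]) = p ^ m * x) :
    padicIntHom P hP n z = padicIntHom P hP m w := by
  have hzw : (p : ℤ_[p]) ^ m * z = p ^ n * w := by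
    apply Subtype.ext
    push_cast
    rw [hz, hw]
    ring
  rw [← padicIntHom_add_pow_mul P hP hcomp n m, hzw, Nat.add_comm,
    padicIntHom_add_pow_mul P hP hcomp]

theorem padicIntHom_add_of_coe_eq (hcomp : ∀ n, p • P (n + 1) = P n) {x y : ℚ_[p]} {k m n : ℕ}
    {u z w : ℤ_[p]} (hu : (u : ℚ_[p]) = p ^ k * (x + y)) (hz : (z : ℚ_[p]) = p ^ n * x)
    (hw : (w : ℚ_[p]) = p ^ m * y) :
    padicIntHom P hP k u = padicIntHom P hP n z + padicIntHom P hP m w := by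
  have hsum : ((p ^ m * z + p ^ n * w : ℤ_[p]) : ℚ_[p]) = p ^ (n + m) * (x + y) := by
    push_cast
    rw [hz, hw]
    ring
  rw [padicIntHom_eq_of_coe_eq P hP hcomp hu hsum, map_add, padicIntHom_add_pow_mul P hP hcomp,
    Nat.add_comm, padicIntHom_add_pow_mul P hP hcomp]

/-- `x = z / pⁿ ↦ (z mod pⁿ) • P n`, for any `n` and `z : ℤ_[p]` representing `x`. -/
noncomputable def padicHom (hcomp : ∀ n, p • P (n + 1) = P n) : ℚ_[p] →+ G :=
  AddMonoidHom.mk'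
    (fun x ↦ padicIntHom P hP (exists_coe_eq_pow_mul x).choose
      (exists_coe_eq_pow_mul x).choose_spec.choose)
    fun x y ↦ padicIntHom_add_of_coe_eq P hP hcomp
      (exists_coe_eq_pow_mul (x + y)).choose_spec.choose_spec
      (exists_coe_eq_pow_mul x).choose_spec.choose_spec
      (exists_coe_eq_pow_mul y).choose_spec.choose_spec

variable (hcomp : ∀ n, p • P (n + 1) = P n)

theorem padicHom_eq_of_coe_eq {x : ℚ_[p]} {n : ℕ} {z : ℤ_[p]} (hz : (z : ℚ_[p]) = p ^ n * x) :
    padicHom P hP hcomp x = padicIntHom P hP n z :=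
  padicIntHom_eq_of_coe_eq P hP hcomp (exists_coe_eq_pow_mul x).choose_spec.choose_spec hz

theorem padicHom_coe (z : ℤ_[p]) : padicHom P hP hcomp z = 0 := by
  rw [padicHom_eq_of_coe_eq P hP hcomp (n := 0) (z := p ^ 0 * z) (by push_cast; rfl),
    padicIntHom_pow_mul]

theorem mem_padicIntSubgroup_of_padicHom_eq_zero (hord : ∀ n, addOrderOf (P n) = p ^ n)
    {x : ℚ_[p]} (hx : padicHom P hP hcomp x = 0) : x ∈ padicIntSubgroup p := by
  obtain ⟨n, z, hz⟩ := exists_coe_eq_pow_mul x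
  rw [padicHom_eq_of_coe_eq P hP hcomp hz, padicIntHom_eq_zero_iff P hP (hord n)] at hx
  obtain ⟨w, rfl⟩ := hx
  refine ⟨w, mul_left_cancel₀ (pow_ne_zero n (Nat.cast_ne_zero.mpr hp.out.ne_zero)) ?_⟩
  rw [← hz]
  push_cast
  rfl

noncomputable def lift : PruferGroup p →+ G :=
  QuotientAddGroup.lift (padicIntSubgroup p) (padicHom P hP hcomp) <| by
    rintro _ ⟨z, rfl⟩
    exact padicHom_coe P hP hcomp z

theorem lift_injective (hord : ∀ n, addOrderOf (P n) = p ^ n) :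
    Function.Injective (lift P hP hcomp) := by
  refine (injective_iff_map_eq_zero _).mpr fun q ↦ ?_
  induction q using QuotientAddGroup.induction_on with
  | H x =>
    intro hx
    rw [lift, QuotientAddGroup.lift_mk] at hx
    exact (QuotientAddGroup.eq_zero_iff x).mpr
      (mem_padicIntSubgroup_of_padicHom_eq_zero P hP hcomp hord hx)

end PruferGroup

/-- If `G` is an infinite abelian `p`-torsion group whose `pⁱ`-torsion
subgroups are all finite, then the Prüfer group `ℚ_p/ℤ_p` embeds into `G`. -/
theorem prufer_embeds_of_infinite_p_torsion
    {G : Type} [AddCommGroup G] (p : ℕ) [Fact p.Prime]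
    (htor : ∀ g : G, ∃ i : ℕ, p ^ i • g = 0)
    (hfin : ∀ i : ℕ, {g : G | p ^ i • g = 0}.Finite)
    (hinf : Infinite G) :
    ∃ f : PruferGroup p →+ G, Function.Injective f := by
  obtain ⟨P, hord, hcomp⟩ := exists_compatible_seq_addOrderOf_eq_pow htor hfin
  have hP (n : ℕ) : p ^ n • P n = 0 := hord n ▸ addOrderOf_nsmul_eq_zero (P n)
  exact ⟨PruferGroup.lift P hP hcomp, PruferGroup.lift_injective P hP hcomp hord⟩
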